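/- Characterization theorem: W(P) = H_n if and only if both (i) P_{0:n} = X X^T over F_2, and (ii) X^{-1} = (P_{0:n-1}^{-T}1_b | P_{0:n-2}^{-T}1_b | ... | P_0^{-T}1_b)^T (in particular X is invertible). -/

import Mathlib

open Matrix

/-- Binary representation of `i` as a vector in `F_2^n`, most significant bit first. -/
def bits (n : ℕ) (i : Fin (2 ^ n)) : Fin n → ZMod 2 :=
  fun k => if Nat.testBit i.val (n - 1 - k.val) then 1 else 0

/-- The vector `1_b = (0,...,0,1)ᵀ`. -/
def oneb (n : ℕ) : Fin n → ZMod 2 := fun k => if k.val = n - 1 then 1 else 0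

/-- Permutation matrix `P(Q)` of the linear permutation `π(Q)`:
entry `(j, i)` is `1` iff `j_b = Q i_b`. -/
def permMat (n : ℕ) (Q : Matrix (Fin n) (Fin n) (ZMod 2)) :
    Matrix (Fin (2 ^ n)) (Fin (2 ^ n)) ℤ :=
  Matrix.of fun j i => if bits n j = Q.mulVec (bits n i) then 1 else 0

/-- The array of butterflies `I_{2^{n-1}} ⊗ DFT_2`. -/
def butterflies (n : ℕ) : Matrix (Fin (2 ^ n)) (Fin (2 ^ n)) ℤ :=
  Matrix.of fun j i =>
    if j.val / 2 = i.val / 2 then (if j.val % 2 = 1 ∧ i.val % 2 = 1 then -1 else 1) else 0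

/-- `W(P) = P(P₀)·(I ⊗ DFT₂)·P(P₁) ⋯ (I ⊗ DFT₂)·P(Pₙ)`. -/
def W (n : ℕ) (P : ℕ → Matrix (Fin n) (Fin n) (ZMod 2)) :
    Matrix (Fin (2 ^ n)) (Fin (2 ^ n)) ℤ :=
  permMat n (P 0) * (List.ofFn fun k : Fin n => butterflies n * permMat n (P (k.val + 1))).prod

/-- `P_{i:j} = P_i P_{i+1} ⋯ P_j` (identity if `j < i`). -/
def Pseg {n : ℕ} (P : ℕ → Matrix (Fin n) (Fin n) (ZMod 2)) (i j : ℕ) :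
    Matrix (Fin n) (Fin n) (ZMod 2) :=
  ((List.range (j + 1 - i)).map fun k => P (i + k)).prod

/-- The spreading matrix `X = (P_{0:n-1}1_b | P_{0:n-2}1_b | ⋯ | P_0 1_b)`. -/
def spread (n : ℕ) (P : ℕ → Matrix (Fin n) (Fin n) (ZMod 2)) :
    Matrix (Fin n) (Fin n) (ZMod 2) :=
  Matrix.of fun r c => (Pseg P 0 (n - 1 - c.val)).mulVec (oneb n) r

/-- The matrix whose rows are `(P_{0:n-1}^{-T}1_b)ᵀ, ..., (P_0^{-T}1_b)ᵀ`. -/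
noncomputable def spreadInvRows (n : ℕ) (P : ℕ → Matrix (Fin n) (Fin n) (ZMod 2)) :
    Matrix (Fin n) (Fin n) (ZMod 2) :=
  Matrix.of fun r c => (Pseg P 0 (n - 1 - r.val))⁻¹.transpose.mulVec (oneb n) c

/-- The Hadamard matrix `H_n` with entries `(-1)^{⟨i_b, j_b⟩}`. -/
def hadamardH (n : ℕ) : Matrix (Fin (2 ^ n)) (Fin (2 ^ n)) ℤ :=
  Matrix.of fun i j => (-1) ^ (∑ k, bits n i k * bits n j k).val

/-- The cyclic bit-rotation matrix `C_n`: ones on the superdiagonal and in the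
bottom-left corner. -/
def Cmat (n : ℕ) : Matrix (Fin n) (Fin n) (ZMod 2) :=
  Matrix.of fun k l => if l.val = k.val + 1 ∨ (k.val = n - 1 ∧ l.val = 0) then 1 else 0

/-!
Index rows and columns by `F₂ⁿ` through `bits`. Pushing every permutation to the right with
`P(Q) · B(v, f) = B(Q v, Q⁻ᵀ f) · P(Q)` turns `W(P)` into
`B(u₀, w₀) ⋯ B(u_{n-1}, w_{n-1}) · P(P_{0:n})`, where `u_k = P_{0:k} 1_b` are the columns of `X`
(in reverse order), `w_k = P_{0:k}⁻ᵀ 1_b`, and `B(u, w)` couples `x` with `x + u` with sign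
`(-1)^{(x·w)(y·w)}`. An entry of such a product is a signed sum over the paths
`x ↦ x + Σ ε_k u_k`. All entries of `H_n` are nonzero, so the `u_k` span, `X` is invertible, and
each entry of `W(P)` is carried by a single path. Then `W(P) = H_n` says that the phase of the
path, a polynomial in `ε` and `x`, equals `xᵀ P_{0:n}⁻¹ (x + Σ ε_k u_k)`; comparing coefficients
gives `u_l · w_k = δ_{lk}`, i.e. `X⁻¹` has rows `w_k`, and `P_{0:n}⁻¹ u_k = w_k`, i.e.
`P_{0:n}⁻¹ X = X⁻ᵀ`, which is `P_{0:n} = X Xᵀ`.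
-/

open Finset

def sign2 (a : ZMod 2) : ℤ := (-1) ^ a.val

theorem sign2_add : ∀ a b : ZMod 2, sign2 (a + b) = sign2 a * sign2 b := by decide

theorem sign2_injective : Function.Injective sign2 := by decide

theorem sign2_ne_zero : ∀ a : ZMod 2, sign2 a ≠ 0 := by decide

theorem zmod2_mul_self : ∀ a : ZMod 2, a * a = a := by decide

theorem zmod2_mul_add_self : ∀ a e : ZMod 2, a * (a + e) = (1 + e) * a := by decide

theorem zmod2_eq_add_iff : ∀ a b e : ZMod 2, b = a + e ↔ e = a + b := by decide

section PathPhase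

variable {ι : Type*}

theorem zmod2_vec_add_self (a : ι → ZMod 2) : a + a = 0 :=
  funext fun i => CharTwo.add_self_eq_zero (a i)

theorem zmod2_vec_add_eq_iff {a b c : ι → ZMod 2} : a + c = b ↔ a = b + c := by
  constructor <;> rintro rfl <;> rw [add_assoc, zmod2_vec_add_self, add_zero]

variable {m : ℕ}

def pathPoint (u : Fin m → ι → ZMod 2) (ε : Fin m → ZMod 2) (x : ι → ZMod 2) (k : Fin m) :
    ι → ZMod 2 :=
  x + ∑ l ∈ Iio k, ε l • u l

theorem pathPoint_snoc_castSucc (u : Fin (m + 1) → ι → ZMod 2) (ε : Fin m → ZMod 2)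
    (e : ZMod 2) (x : ι → ZMod 2) (k : Fin m) :
    pathPoint u (Fin.snoc ε e) x k.castSucc = pathPoint (Fin.init u) ε x k := by
  simp only [pathPoint, Fin.Iio_castSucc, sum_map, Fin.coe_castSuccEmb, Fin.snoc_castSucc,
    Fin.init]

theorem pathPoint_snoc_last (u : Fin (m + 1) → ι → ZMod 2) (ε : Fin m → ZMod 2) (e : ZMod 2)
    (x : ι → ZMod 2) :
    pathPoint u (Fin.snoc ε e) x (Fin.last m) = x + ∑ k, ε k • Fin.init u k := by
  simp only [pathPoint, Fin.Iio_last_eq_map, sum_map, Fin.coe_castSuccEmb, Fin.snoc_castSucc,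
    Fin.init]

variable [Fintype ι]

def pathPhase (u w : Fin m → ι → ZMod 2) (ε : Fin m → ZMod 2) (x : ι → ZMod 2) : ZMod 2 :=
  ∑ k, (pathPoint u ε x k ⬝ᵥ w k) * ((pathPoint u ε x k + ε k • u k) ⬝ᵥ w k)

theorem pathPhase_snoc (u w : Fin (m + 1) → ι → ZMod 2) (ε : Fin m → ZMod 2) (e : ZMod 2)
    (x : ι → ZMod 2) :
    pathPhase u w (Fin.snoc ε e) x = pathPhase (Fin.init u) (Fin.init w) ε x
      + ((x + ∑ k, ε k • Fin.init u k) ⬝ᵥ w (Fin.last m))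
        * ((x + ∑ k, ε k • Fin.init u k + e • u (Fin.last m)) ⬝ᵥ w (Fin.last m)) := by
  simp only [pathPhase, Fin.sum_univ_castSucc, pathPoint_snoc_castSucc, pathPoint_snoc_last,
    Fin.snoc_castSucc, Fin.snoc_last]
  rfl

theorem pathPhase_eq_of_dotProduct_eq_one {u w : Fin m → ι → ZMod 2}
    (hu : ∀ k, u k ⬝ᵥ w k = 1) (ε : Fin m → ZMod 2) (x : ι → ZMod 2) :
    pathPhase u w ε x = ∑ k, (1 + ε k) * (x ⬝ᵥ w k)
      + ∑ k, (1 + ε k) * ∑ l ∈ Iio k, ε l * (u l ⬝ᵥ w k) := by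
  rw [← sum_add_distrib]
  refine sum_congr rfl fun k _ => ?_
  have hp : pathPoint u ε x k ⬝ᵥ w k = x ⬝ᵥ w k + ∑ l ∈ Iio k, ε l * (u l ⬝ᵥ w k) := by
    simp [pathPoint, add_dotProduct, sum_dotProduct, smul_dotProduct]
  rw [add_dotProduct, smul_dotProduct, hu, smul_eq_mul, mul_one, hp, zmod2_mul_add_self, mul_add]

theorem eq_zero_of_forall_sum_one_add_mul_sum_Iio {c : Fin m → Fin m → ZMod 2}
    (h : ∀ ε : Fin m → ZMod 2, ∑ k, (1 + ε k) * ∑ l ∈ Iio k, ε l * c l k = 0)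
    {l k : Fin m} (hlk : l < k) : c l k = 0 := by
  have hrow : ∀ j, ∑ i, (if j < i then c j i else 0) = 0 := fun j =>
    Eq.trans (sum_congr rfl fun i _ => by by_cases hij : i = j <;> simp [hij, Pi.single_apply])
      (h (Pi.single j 1))
  have hpair := h (Pi.single l 1 + Pi.single k 1)
  simp [Pi.single_apply, add_mul, sum_add_distrib, hrow, hlk, not_lt_of_gt hlk] at hpair
  exact hpair

variable {u w : Fin m → ι → ZMod 2} {A : Matrix ι ι (ZMod 2)}

theorem dotProduct_mulVec_comm_of_self_eq_sum (hq : ∀ x, x ⬝ᵥ (A *ᵥ x) = ∑ k, x ⬝ᵥ w k)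
    (x y : ι → ZMod 2) : x ⬝ᵥ (A *ᵥ y) = y ⬝ᵥ (A *ᵥ x) := by
  have hxy := hq (x + y)
  simp only [mulVec_add, add_dotProduct, dotProduct_add, sum_add_distrib, ← hq] at hxy
  exact (CharTwo.add_eq_zero.mp (by linear_combination hxy)).symm

theorem dotProduct_mulVec_self_eq_sum_of_dotProduct_eq_ite
    (hspan : Function.Surjective fun ε : Fin m → ZMod 2 => ∑ k, ε k • u k)
    (hδ : ∀ l k, u l ⬝ᵥ w k = if l = k then 1 else 0) (hA : ∀ k, A *ᵥ u k = w k)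
    (x : ι → ZMod 2) : x ⬝ᵥ (A *ᵥ x) = ∑ k, x ⬝ᵥ w k := by
  obtain ⟨c, rfl⟩ := hspan x
  have hc : ∀ k, (∑ l, c l • u l) ⬝ᵥ w k = c k := by
    simp [sum_dotProduct, smul_dotProduct, hδ]
  simp [mulVec_sum, mulVec_smul, hA, dotProduct_sum, dotProduct_smul, hc, zmod2_mul_self]

variable [DecidableEq ι]

theorem forall_sum_one_add_mul_dotProduct_iff :
    (∀ (ε : Fin m → ZMod 2) x, ∑ k, (1 + ε k) * (x ⬝ᵥ w k) = x ⬝ᵥ (A *ᵥ (x + ∑ k, ε k • u k))) ↔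
      (∀ k, A *ᵥ u k = w k) ∧ ∀ x, x ⬝ᵥ (A *ᵥ x) = ∑ k, x ⬝ᵥ w k := by
  have hexp : ∀ (ε : Fin m → ZMod 2) x,
      (∑ k, (1 + ε k) * (x ⬝ᵥ w k) = x ⬝ᵥ (A *ᵥ (x + ∑ k, ε k • u k))) ↔
        ∑ k, x ⬝ᵥ w k + ∑ k, ε k * (x ⬝ᵥ w k)
          = x ⬝ᵥ (A *ᵥ x) + ∑ k, ε k * (x ⬝ᵥ (A *ᵥ u k)) := by
    intro ε x
    simp [add_mul, sum_add_distrib, mulVec_add, mulVec_sum, mulVec_smul, dotProduct_add,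
      dotProduct_sum, dotProduct_smul]
  simp only [hexp]
  constructor
  · intro h
    have hq : ∀ x, x ⬝ᵥ (A *ᵥ x) = ∑ k, x ⬝ᵥ w k := fun x => by simpa using (h 0 x).symm
    have hlin : ∀ k x, x ⬝ᵥ w k = x ⬝ᵥ (A *ᵥ u k) := fun k x => by
      have hk := h (Pi.single k 1) x
      rw [hq x, add_right_inj] at hk
      simpa [Pi.single_apply] using hk
    exact ⟨fun k => funext fun i => by simpa using (hlin k (Pi.single i 1)).symm, hq⟩
  · rintro ⟨hA, hq⟩ ε x
    simp [hA, hq]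

theorem pathPhase_eq_iff (hu : ∀ k, u k ⬝ᵥ w k = 1)
    (hspan : Function.Surjective fun ε : Fin m → ZMod 2 => ∑ k, ε k • u k) :
    (∀ ε x, pathPhase u w ε x = x ⬝ᵥ (A *ᵥ (x + ∑ k, ε k • u k))) ↔
      (∀ l k, u l ⬝ᵥ w k = if l = k then 1 else 0) ∧ ∀ k, A *ᵥ u k = w k := by
  have hcross : (∀ l k, l < k → u l ⬝ᵥ w k = 0) →
      ∀ ε : Fin m → ZMod 2, ∑ k, (1 + ε k) * ∑ l ∈ Iio k, ε l * (u l ⬝ᵥ w k) = 0 :=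
    fun h ε => sum_eq_zero fun k _ => by
      rw [sum_eq_zero fun l hl => by rw [h l k (mem_Iio.mp hl), mul_zero], mul_zero]
  simp only [pathPhase_eq_of_dotProduct_eq_one hu]
  constructor
  · intro h
    have hupper : ∀ l k, l < k → u l ⬝ᵥ w k = 0 := fun l k hlk =>
      eq_zero_of_forall_sum_one_add_mul_sum_Iio (fun ε => by simpa using h ε 0) hlk
    obtain ⟨hA, hq⟩ := forall_sum_one_add_mul_dotProduct_iff.mp fun ε x => by
      simpa [hcross hupper] using h ε x
    refine ⟨fun l k => ?_, hA⟩
    rcases lt_trichotomy l k with hlk | rfl | hkl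
    · rw [hupper l k hlk, if_neg hlk.ne]
    · rw [hu, if_pos rfl]
    · rw [if_neg hkl.ne', ← hA k, dotProduct_mulVec_comm_of_self_eq_sum hq, hA, hupper k l hkl]
  · rintro ⟨hδ, hA⟩ ε x
    rw [hcross (fun l k hlk => by rw [hδ, if_neg hlk.ne]) ε, add_zero]
    exact forall_sum_one_add_mul_dotProduct_iff.mpr
      ⟨hA, dotProduct_mulVec_self_eq_sum_of_dotProduct_eq_ite hspan hδ hA⟩ ε x

end PathPhase

section Butterfly

variable {ι : Type*} [Fintype ι] [DecidableEq ι]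

def linPermMat (Q : Matrix ι ι (ZMod 2)) : Matrix (ι → ZMod 2) (ι → ZMod 2) ℤ :=
  of fun x y => if x = Q *ᵥ y then 1 else 0

def butterfly (u w : ι → ZMod 2) : Matrix (ι → ZMod 2) (ι → ZMod 2) ℤ :=
  of fun x y => ∑ e : ZMod 2, if y = x + e • u then sign2 ((x ⬝ᵥ w) * (y ⬝ᵥ w)) else 0

def butterflyProd {m : ℕ} (u w : Fin m → ι → ZMod 2) : Matrix (ι → ZMod 2) (ι → ZMod 2) ℤ :=
  (List.ofFn fun k => butterfly (u k) (w k)).prod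

theorem mul_linPermMat_apply (M : Matrix (ι → ZMod 2) (ι → ZMod 2) ℤ) (Q : Matrix ι ι (ZMod 2))
    (x y : ι → ZMod 2) : (M * linPermMat Q) x y = M x (Q *ᵥ y) := by
  simp [mul_apply, linPermMat]

theorem linPermMat_mul_linPermMat (Q R : Matrix ι ι (ZMod 2)) :
    linPermMat Q * linPermMat R = linPermMat (Q * R) := by
  ext x y
  rw [mul_linPermMat_apply]
  simp [linPermMat, mulVec_mulVec]

theorem linPermMat_mul_apply {Q : Matrix ι ι (ZMod 2)} (hQ : IsUnit Q)
    (M : Matrix (ι → ZMod 2) (ι → ZMod 2) ℤ) (x y : ι → ZMod 2) :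
    (linPermMat Q * M) x y = M (Q⁻¹ *ᵥ x) y := by
  have hQ' := (isUnit_iff_isUnit_det Q).mp hQ
  have hcond : ∀ z, x = Q *ᵥ z ↔ z = Q⁻¹ *ᵥ x := fun z => by
    constructor <;> rintro rfl <;>
      simp [mulVec_mulVec, mul_nonsing_inv _ hQ', nonsing_inv_mul _ hQ']
  simp [mul_apply, linPermMat, hcond]

theorem mul_butterfly_apply (M : Matrix (ι → ZMod 2) (ι → ZMod 2) ℤ) (u w x y : ι → ZMod 2) :
    (M * butterfly u w) x y
      = ∑ e : ZMod 2, sign2 (((y + e • u) ⬝ᵥ w) * (y ⬝ᵥ w)) * M x (y + e • u) := by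
  simp only [mul_apply, butterfly, of_apply, mul_sum, eq_comm (a := y), zmod2_vec_add_eq_iff]
  rw [sum_comm]
  simp [mul_comm]

theorem linPermMat_mul_butterfly {Q : Matrix ι ι (ZMod 2)} (hQ : IsUnit Q) (u w : ι → ZMod 2) :
    linPermMat Q * butterfly u w = butterfly (Q *ᵥ u) (Q⁻¹ᵀ *ᵥ w) * linPermMat Q := by
  have hQ' := (isUnit_iff_isUnit_det Q).mp hQ
  ext x y
  rw [linPermMat_mul_apply hQ, mul_linPermMat_apply]
  simp only [butterfly, of_apply]
  refine sum_congr rfl fun e _ => ?_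
  have hcond : y = Q⁻¹ *ᵥ x + e • u ↔ Q *ᵥ y = x + e • (Q *ᵥ u) := by
    rw [← (mulVec_injective_iff_isUnit.mpr hQ).eq_iff, mulVec_add, mulVec_smul, mulVec_mulVec,
      mul_nonsing_inv _ hQ', one_mulVec]
  simp only [hcond, dotProduct_mulVec, vecMul_transpose, mulVec_mulVec, nonsing_inv_mul _ hQ',
    one_mulVec]

variable {m : ℕ}

theorem butterflyProd_succ (u w : Fin (m + 1) → ι → ZMod 2) :
    butterflyProd u w = butterflyProd (Fin.init u) (Fin.init w)
      * butterfly (u (Fin.last m)) (w (Fin.last m)) := by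
  rw [butterflyProd, List.ofFn_succ', List.prod_concat]
  rfl

theorem butterflyProd_apply (u w : Fin m → ι → ZMod 2) (x y : ι → ZMod 2) :
    butterflyProd u w x y = ∑ ε : Fin m → ZMod 2,
      if y = x + ∑ k, ε k • u k then sign2 (pathPhase u w ε x) else 0 := by
  induction m generalizing y with
  | zero => simp [butterflyProd, pathPhase, one_apply, eq_comm, sign2]
  | succ m ih =>
    rw [butterflyProd_succ, mul_butterfly_apply,
      ← (Fin.snocEquiv fun _ => ZMod 2).sum_comp, Fintype.sum_prod_type]
    refine sum_congr rfl fun e _ => ?_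
    rw [ih, mul_sum]
    refine sum_congr rfl fun ε _ => ?_
    simp only [Fin.snocEquiv, Equiv.coe_fn_mk, Fin.sum_univ_castSucc, Fin.snoc_castSucc,
      Fin.snoc_last, pathPhase_snoc, Fin.init, zmod2_vec_add_eq_iff, ← add_assoc]
    split_ifs with h
    · subst h
      rw [sign2_add, mul_comm, add_assoc (x + _), zmod2_vec_add_self, add_zero]
    · rw [mul_zero]

theorem butterflyProd_apply_add_sum {u : Fin m → ι → ZMod 2} (w : Fin m → ι → ZMod 2)
    (hu : Function.Injective fun ε : Fin m → ZMod 2 => ∑ k, ε k • u k)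
    (x : ι → ZMod 2) (ε : Fin m → ZMod 2) :
    butterflyProd u w x (x + ∑ k, ε k • u k) = sign2 (pathPhase u w ε x) := by
  simp [butterflyProd_apply, hu.eq_iff, eq_comm (a := ε)]

theorem surjective_sum_smul_of_butterflyProd_ne_zero {u w : Fin m → ι → ZMod 2}
    (h : ∀ y, butterflyProd u w 0 y ≠ 0) :
    Function.Surjective fun ε : Fin m → ZMod 2 => ∑ k, ε k • u k := fun y => by
  have hy := h y
  rw [butterflyProd_apply] at hy
  obtain ⟨ε, -, hε⟩ := exists_ne_zero_of_sum_ne_zero hy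
  exact ⟨ε, of_not_not fun hne => hε (if_neg (by rwa [zero_add, eq_comm]))⟩

theorem butterflyProd_eq_sign_iff {u : Fin m → ι → ZMod 2} (w : Fin m → ι → ZMod 2)
    (A : Matrix ι ι (ZMod 2))
    (hu : Function.Bijective fun ε : Fin m → ZMod 2 => ∑ k, ε k • u k) :
    (∀ x y, butterflyProd u w x y = sign2 (x ⬝ᵥ (A *ᵥ y))) ↔
      ∀ ε x, pathPhase u w ε x = x ⬝ᵥ (A *ᵥ (x + ∑ k, ε k • u k)) := by
  constructor
  · intro h ε x
    apply sign2_injective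
    rw [← butterflyProd_apply_add_sum w hu.1, h]
  · intro h x y
    obtain ⟨ε, hε⟩ := hu.2 (x + y)
    have hy : y = x + ∑ k, ε k • u k := by
      rw [show ∑ k, ε k • u k = x + y from hε, ← add_assoc, zmod2_vec_add_self, zero_add]
    rw [hy, butterflyProd_apply_add_sum w hu.1, h]

end Butterfly

section Transfer

variable {n : ℕ}

theorem Pseg_zero (P : ℕ → Matrix (Fin n) (Fin n) (ZMod 2)) : Pseg P 0 0 = P 0 := by
  simp [Pseg]

theorem Pseg_succ (P : ℕ → Matrix (Fin n) (Fin n) (ZMod 2)) (m : ℕ) :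
    Pseg P 0 (m + 1) = Pseg P 0 m * P (m + 1) := by
  simp [Pseg, List.range_succ, mul_assoc]

theorem isUnit_Pseg {P : ℕ → Matrix (Fin n) (Fin n) (ZMod 2)} {m : ℕ}
    (hP : ∀ k ≤ m, IsUnit (P k)) : IsUnit (Pseg P 0 m) :=
  List.prod_isUnit <| by simpa [Pseg] using fun k hk => hP k (by omega)

theorem linPermMat_mul_prod_butterfly (P : ℕ → Matrix (Fin n) (Fin n) (ZMod 2))
    (v f : Fin n → ZMod 2) (m : ℕ) (hP : ∀ k < m, IsUnit (Pseg P 0 k)) :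
    linPermMat (P 0) * (List.ofFn fun k : Fin m => butterfly v f * linPermMat (P (k + 1))).prod
      = butterflyProd (fun k : Fin m => Pseg P 0 k *ᵥ v) (fun k : Fin m => (Pseg P 0 k)⁻¹ᵀ *ᵥ f)
        * linPermMat (Pseg P 0 m) := by
  induction m with
  | zero => simp [butterflyProd, Pseg_zero]
  | succ m ih =>
    rw [List.ofFn_succ', List.prod_concat]
    simp only [Fin.val_castSucc, Fin.val_last]
    rw [← mul_assoc, ih fun k hk => hP k (by omega),
      butterflyProd_succ, mul_assoc, ← mul_assoc (linPermMat _),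
      linPermMat_mul_butterfly (hP m (by omega)), mul_assoc, linPermMat_mul_linPermMat,
      ← Pseg_succ, ← mul_assoc]
    rfl

end Transfer

section Bits

theorem bits_succ {m : ℕ} (i : Fin (2 ^ (m + 1))) :
    bits (m + 1) i = Fin.snoc (bits m ⟨i / 2, Nat.div_lt_of_lt_mul (pow_succ' 2 m ▸ i.2)⟩)
      (i.val : ZMod 2) := by
  funext k
  refine Fin.lastCases ?_ (fun k => ?_) k
  · rw [Fin.snoc_last, ← ZMod.natCast_mod]
    rcases Nat.mod_two_eq_zero_or_one i with h | h <;> simp [bits, Nat.testBit_zero, h]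
  · simp only [bits, Fin.snoc_castSucc, Fin.val_castSucc, Nat.testBit_div_two,
      show m + 1 - 1 - (k : ℕ) = m - 1 - k + 1 by omega]

theorem bits_injective (n : ℕ) : Function.Injective (bits n) := by
  induction n with
  | zero => exact fun i j _ => Fin.ext (by omega)
  | succ m ih =>
    intro i j h
    rw [bits_succ, bits_succ, Fin.snoc_inj] at h
    have hdiv := Fin.mk.inj_iff.mp (ih h.1)
    have hmod := (ZMod.natCast_eq_natCast_iff' _ _ 2).mp h.2
    exact Fin.ext (by omega)

noncomputable def bitsEquiv (n : ℕ) : Fin (2 ^ n) ≃ (Fin n → ZMod 2) :=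
  Equiv.ofBijective (bits n) <| (Fintype.bijective_iff_injective_and_card _).mpr
    ⟨bits_injective n, by simp [ZMod.card]⟩

theorem oneb_succ (m : ℕ) : oneb (m + 1) = Pi.single (Fin.last m) 1 := by
  funext k
  simp [oneb, Pi.single_apply, Fin.ext_iff]

theorem bits_dotProduct_oneb {m : ℕ} (i : Fin (2 ^ (m + 1))) :
    bits (m + 1) i ⬝ᵥ oneb (m + 1) = i.val := by
  rw [oneb_succ, dotProduct_single, bits_succ, Fin.snoc_last, mul_one]

theorem bits_eq_add_smul_oneb_iff {m : ℕ} (i j : Fin (2 ^ (m + 1))) (e : ZMod 2) :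
    bits (m + 1) j = bits (m + 1) i + e • oneb (m + 1) ↔
      j.val / 2 = i.val / 2 ∧ e = i.val + j.val := by
  rw [funext_iff, Fin.forall_fin_succ', bits_succ, bits_succ, oneb_succ]
  simp [Fin.snoc_castSucc, Fin.snoc_last, ← funext_iff, (bits_injective m).eq_iff,
    zmod2_eq_add_iff, (Fin.castSucc_lt_last _).ne]

theorem sign2_natCast_mul (a b : ℕ) :
    sign2 ((a : ZMod 2) * b) = if a % 2 = 1 ∧ b % 2 = 1 then -1 else 1 := by
  rw [← ZMod.natCast_mod a, ← ZMod.natCast_mod b]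
  rcases Nat.mod_two_eq_zero_or_one a with ha | ha <;>
    rcases Nat.mod_two_eq_zero_or_one b with hb | hb <;> simp [ha, hb] <;> decide

theorem butterflies_eq_submatrix {n : ℕ} (hn : 0 < n) :
    butterflies n = (butterfly (oneb n) (oneb n)).submatrix (bits n) (bits n) := by
  obtain ⟨m, rfl⟩ := Nat.exists_eq_add_one_of_ne_zero hn.ne'
  ext j i
  simp only [butterflies, butterfly, of_apply, submatrix_apply, bits_eq_add_smul_oneb_iff,
    bits_dotProduct_oneb]
  by_cases h : j.val / 2 = i.val / 2
  · simp [h, sign2_natCast_mul]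
  · simp [h, Ne.symm h]

end Bits

theorem eq_mul_transpose_and_inv_eq_iff {ι K : Type*} [Fintype ι] [DecidableEq ι] [CommRing K]
    {X Q R : Matrix ι ι K} (hQ : IsUnit Q) (hX : IsUnit X) :
    Q = X * Xᵀ ∧ X⁻¹ = R ↔ R * X = 1 ∧ Q⁻¹ * X = Rᵀ := by
  have hXd := (isUnit_iff_isUnit_det X).mp hX
  have hQd := (isUnit_iff_isUnit_det Q).mp hQ
  have hR : X⁻¹ = R ↔ R * X = 1 := ⟨fun h => h ▸ nonsing_inv_mul X hXd, inv_eq_left_inv⟩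
  rw [← hR]
  constructor
  · rintro ⟨rfl, rfl⟩
    rw [Matrix.mul_inv_rev, transpose_nonsing_inv, mul_assoc, nonsing_inv_mul _ hXd, mul_one]
    exact ⟨rfl, rfl⟩
  · rintro ⟨rfl, hQX⟩
    refine ⟨?_, rfl⟩
    calc Q = Q * (X * X⁻¹)ᵀ := by rw [mul_nonsing_inv _ hXd, transpose_one, mul_one]
      _ = Q * (Q⁻¹ * X) * Xᵀ := by rw [hQX, transpose_mul, mul_assoc]
      _ = X * Xᵀ := by rw [← mul_assoc, mul_nonsing_inv _ hQd, one_mul]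

section Spread

variable {n : ℕ} (P : ℕ → Matrix (Fin n) (Fin n) (ZMod 2))

def spreadCol (k : Fin n) : Fin n → ZMod 2 := Pseg P 0 k *ᵥ oneb n

noncomputable def spreadInvRow (k : Fin n) : Fin n → ZMod 2 := (Pseg P 0 k)⁻¹ᵀ *ᵥ oneb n

theorem spread_apply_rev (r k : Fin n) : spread n P r k.rev = spreadCol P k r := by
  simp only [spread, spreadCol, of_apply, Fin.val_rev]
  congr 3
  omega

theorem spreadInvRows_rev_apply (k c : Fin n) :
    spreadInvRows n P k.rev c = spreadInvRow P k c := by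
  simp only [spreadInvRows, spreadInvRow, of_apply, Fin.val_rev]
  congr 4
  omega

theorem sum_smul_spreadCol :
    (fun ε : Fin n → ZMod 2 => ∑ k, ε k • spreadCol P k)
      = (spread n P).mulVec ∘ fun ε c => ε c.rev := by
  funext ε r
  simp only [Function.comp, mulVec, dotProduct, Finset.sum_apply, Pi.smul_apply, smul_eq_mul]
  exact Fintype.sum_equiv Fin.revPerm _ _ fun k => by
    rw [Fin.revPerm_apply, spread_apply_rev, Fin.rev_rev, mul_comm]

theorem isUnit_spread_iff_surjective :
    IsUnit (spread n P) ↔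
      Function.Surjective fun ε : Fin n → ZMod 2 => ∑ k, ε k • spreadCol P k := by
  have hrev : Function.Involutive fun (ε : Fin n → ZMod 2) c => ε c.rev :=
    fun ε => funext fun c => by simp
  rw [sum_smul_spreadCol, Function.Surjective.of_comp_iff _ hrev.surjective,
    mulVec_surjective_iff_isUnit]

theorem spreadInvRows_mul_spread_eq_one_iff :
    spreadInvRows n P * spread n P = 1 ↔
      ∀ l k, spreadCol P l ⬝ᵥ spreadInvRow P k = if l = k then 1 else 0 := by
  rw [← Matrix.ext_iff, Fin.rev_surjective.forall, forall_comm, Fin.rev_surjective.forall]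
  simp only [mul_apply, spreadInvRows_rev_apply, spread_apply_rev, one_apply, Fin.rev_inj]
  exact forall₂_congr fun l k => by simp only [dotProduct, mul_comm, @eq_comm _ k l]

theorem mul_spread_eq_transpose_iff (A : Matrix (Fin n) (Fin n) (ZMod 2)) :
    A * spread n P = (spreadInvRows n P)ᵀ ↔ ∀ k, A *ᵥ spreadCol P k = spreadInvRow P k := by
  rw [← Matrix.ext_iff, forall_comm, Fin.rev_surjective.forall]
  simp only [mul_apply, spread_apply_rev, transpose_apply, spreadInvRows_rev_apply, funext_iff,
    mulVec, dotProduct]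

theorem oneb_dotProduct_oneb (hn : 0 < n) : oneb n ⬝ᵥ oneb n = 1 := by
  obtain ⟨m, rfl⟩ := Nat.exists_eq_add_one_of_ne_zero hn.ne'
  rw [oneb_succ, dotProduct_single, Pi.single_eq_same, mul_one]

theorem spreadCol_dotProduct_spreadInvRow {k : Fin n} (hk : IsUnit (Pseg P 0 k)) :
    spreadCol P k ⬝ᵥ spreadInvRow P k = 1 := by
  rw [spreadCol, spreadInvRow, dotProduct_mulVec, vecMul_transpose, mulVec_mulVec,
    nonsing_inv_mul _ ((isUnit_iff_isUnit_det _).mp hk), one_mulVec, oneb_dotProduct_oneb k.pos]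

theorem W_eq_hadamardH_iff (hP : ∀ k ≤ n, IsUnit (P k)) :
    W n P = hadamardH n ↔ ∀ x y,
      butterflyProd (spreadCol P) (spreadInvRow P) x y = sign2 (x ⬝ᵥ ((Pseg P 0 n)⁻¹ *ᵥ y)) := by
  have hQ : IsUnit (Pseg P 0 n) := isUnit_Pseg hP
  have hW : W n P = reindexAlgEquiv ℤ ℤ (bitsEquiv n).symm
      (butterflyProd (spreadCol P) (spreadInvRow P) * linPermMat (Pseg P 0 n)) := by
    refine Eq.trans ?_ (congrArg _ (linPermMat_mul_prod_butterfly P (oneb n) (oneb n) n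
      fun k hk => isUnit_Pseg fun j hj => hP j (by omega)))
    rw [map_mul, map_list_prod, List.map_ofFn, W]
    congr 3
    funext k
    simp only [Function.comp, map_mul, butterflies_eq_submatrix k.pos]
    rfl
  have hH : hadamardH n = reindexAlgEquiv ℤ ℤ (bitsEquiv n).symm
      (of fun x y : Fin n → ZMod 2 => sign2 (x ⬝ᵥ y)) := rfl
  rw [hW, hH, (reindexAlgEquiv ℤ ℤ _).injective.eq_iff, ← Matrix.ext_iff]
  simp only [mul_linPermMat_apply, of_apply]
  refine forall_congr' fun x => ?_
  conv_rhs => rw [(mulVec_surjective_iff_isUnit.mpr hQ).forall]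
  simp [mulVec_mulVec, nonsing_inv_mul _ ((isUnit_iff_isUnit_det _).mp hQ)]

end Spread

/-- Characterization theorem: `W(P) = H_n` iff `P_{0:n} = X Xᵀ` over `F_2` and
`X` is invertible with `X⁻¹ = (P_{0:n-1}^{-T}1_b | ⋯ | P_0^{-T}1_b)ᵀ`. -/
theorem characterization (n : ℕ) (P : ℕ → Matrix (Fin n) (Fin n) (ZMod 2))
    (hP : ∀ k ≤ n, IsUnit (P k)) :
    W n P = hadamardH n ↔
      (Pseg P 0 n = spread n P * (spread n P)ᵀ ∧
        IsUnit (spread n P) ∧ (spread n P)⁻¹ = spreadInvRows n P) := by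
  have hdiag : ∀ k, spreadCol P k ⬝ᵥ spreadInvRow P k = 1 := fun k =>
    spreadCol_dotProduct_spreadInvRow P (isUnit_Pseg fun j hj => hP j (by omega))
  have hcore : IsUnit (spread n P) → (W n P = hadamardH n ↔
      Pseg P 0 n = spread n P * (spread n P)ᵀ ∧ (spread n P)⁻¹ = spreadInvRows n P) := by
    intro hX
    have hS := (isUnit_spread_iff_surjective P).mp hX
    rw [W_eq_hadamardH_iff P hP,
      butterflyProd_eq_sign_iff _ _ (Finite.surjective_iff_bijective.mp hS),
      pathPhase_eq_iff hdiag hS, eq_mul_transpose_and_inv_eq_iff (isUnit_Pseg hP) hX,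
      spreadInvRows_mul_spread_eq_one_iff, mul_spread_eq_transpose_iff]
  constructor
  · intro h
    have hX : IsUnit (spread n P) := (isUnit_spread_iff_surjective P).mpr <|
      surjective_sum_smul_of_butterflyProd_ne_zero fun y => by
        rw [(W_eq_hadamardH_iff P hP).mp h]
        exact sign2_ne_zero _
    exact ⟨((hcore hX).mp h).1, hX, ((hcore hX).mp h).2⟩
  · rintro ⟨h1, hX, h2⟩
    exact (hcore hX).mpr ⟨h1, h2⟩
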